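/- Let G be a finite simple graph on n vertices with m ≥ 1 edges, and let R_{1/2}(G) = Σ_{ij ∈ E(G)} (d(i)d(j))^{1/2} be its general Randić index with exponent 1/2. Then EE(G) > e^{R_{1/2}/m} + (n − 1) − R_{1/2}/m. -/

import Mathlib

/-!
Let `λ₁` be the largest adjacency eigenvalue. Testing the Rayleigh quotient on the vector
`(√d(v))ᵥ` gives `λ₁ ≥ 2 R_{1/2} / 2m = R_{1/2} / m ≥ 0`. The eigenvalues sum to `tr A = 0`, and
`eˣ ≥ 1 + x` with strict inequality at a negative eigenvalue (one exists because `A ≠ 0`), so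
`EE > e^{λ₁} + (n - 1) - λ₁`. Finally `x ↦ eˣ - x` is increasing on `[0, ∞)`.
-/

open Finset Real

namespace EstradaIndexPaper

/-- The adjacency matrix of a simple graph over `ℝ` is Hermitian. -/
theorem adjMatrix_isHermitian {n : ℕ} (G : SimpleGraph (Fin n)) [DecidableRel G.Adj] :
    (G.adjMatrix ℝ).IsHermitian := by
  unfold Matrix.IsHermitian
  rw [Matrix.conjTranspose_eq_transpose_of_trivial]
  exact G.isSymm_adjMatrix

/-- The eigenvalues of the adjacency matrix of `G`. -/
noncomputable def eig {n : ℕ} (G : SimpleGraph (Fin n)) [DecidableRel G.Adj] : Fin n → ℝ :=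
  (adjMatrix_isHermitian G).eigenvalues

/-- The Estrada index of `G`: the sum of `e^{λ_i}` over the adjacency eigenvalues. -/
noncomputable def EE {n : ℕ} (G : SimpleGraph (Fin n)) [DecidableRel G.Adj] : ℝ :=
  ∑ i, Real.exp (eig G i)

/-- The largest adjacency eigenvalue `λ₁` of `G`. -/
noncomputable def lam1 {n : ℕ} (G : SimpleGraph (Fin n)) [DecidableRel G.Adj] : ℝ :=
  ⨆ i, eig G i

/-- The Randić index `R(G) = Σ_{ij ∈ E(G)} (d(i)d(j))^{-1/2}`. -/
noncomputable def randic {n : ℕ} (G : SimpleGraph (Fin n)) [DecidableRel G.Adj] : ℝ :=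
  ∑ e ∈ G.edgeFinset,
    Sym2.lift ⟨fun i j => (Real.sqrt ((G.degree i : ℝ) * (G.degree j : ℝ)))⁻¹,
      fun i j => by simp [mul_comm]⟩ e

/-- The general Randić index `R_{1/2}(G) = Σ_{ij ∈ E(G)} (d(i)d(j))^{1/2}`. -/
noncomputable def randicHalf {n : ℕ} (G : SimpleGraph (Fin n)) [DecidableRel G.Adj] : ℝ :=
  ∑ e ∈ G.edgeFinset,
    Sym2.lift ⟨fun i j => Real.sqrt ((G.degree i : ℝ) * (G.degree j : ℝ)),
      fun i j => by simp [mul_comm]⟩ e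

end EstradaIndexPaper

open Matrix

namespace SimpleGraph

lemma adjMatrix_ne_zero {V R : Type*} (G : SimpleGraph V) [DecidableRel G.Adj]
    [MulZeroOneClass R] [Nontrivial R] (hG : G ≠ ⊥) :
    G.adjMatrix R ≠ 0 := by
  obtain ⟨i, j, hij⟩ := ne_bot_iff_exists_adj.mp hG
  intro h
  simpa [hij] using congr_fun₂ h i j

variable {V M : Type*} [Fintype V] [AddCommMonoid M] (G : SimpleGraph V) [DecidableRel G.Adj]

lemma sum_darts_eq_sum_sum_adj (g : V → V → M) :
    ∑ d : G.Dart, g d.fst d.snd = ∑ i, ∑ j, if G.Adj i j then g i j else 0 := by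
  let e : G.Dart ≃ {p : V × V // G.Adj p.1 p.2} :=
    { toFun := fun d => ⟨d.toProd, d.adj⟩
      invFun := fun p => ⟨p.1, p.2⟩ }
  rw [Fintype.sum_equiv e (fun d => g d.fst d.snd) (fun p => g p.1.1 p.1.2) (fun _ => rfl),
    ← Finset.sum_subtype (p := fun p : V × V => G.Adj p.1 p.2) {p | G.Adj p.1 p.2} (by simp)
      (fun p => g p.1 p.2),
    Finset.sum_filter, ← Finset.univ_product_univ, Finset.sum_product]

lemma sum_darts_edge_eq_two_nsmul [DecidableEq V] (f : Sym2 V → M) :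
    ∑ d : G.Dart, f d.edge = 2 • ∑ e ∈ G.edgeFinset, f e := by
  rw [← Finset.sum_fiberwise_of_maps_to (t := G.edgeFinset) (g := Dart.edge)
    (fun d _ => mem_edgeFinset.mpr d.edge_mem), Finset.smul_sum]
  refine Finset.sum_congr rfl fun e he => ?_
  rw [Finset.sum_congr rfl fun d hd => by rw [(Finset.mem_filter.mp hd).2], Finset.sum_const,
    G.dart_edge_fiber_card e (mem_edgeFinset.mp he)]

end SimpleGraph

namespace Matrix.IsHermitian

variable {ι : Type*} [Fintype ι] [DecidableEq ι] {A : Matrix ι ι ℝ}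

lemma dotProduct_mulVec_le (hA : A.IsHermitian) {c : ℝ} (hc : ∀ i, hA.eigenvalues i ≤ c)
    (x : ι → ℝ) :
    x ⬝ᵥ A *ᵥ x ≤ c * (x ⬝ᵥ x) := by
  set U : Matrix ι ι ℝ := (hA.eigenvectorUnitary : Matrix ι ι ℝ)
  set y : ι → ℝ := star U *ᵥ x with hy
  have hUU : U * star U = 1 := mem_unitaryGroup_iff.mp hA.eigenvectorUnitary.2
  have hUy : U *ᵥ y = x := by rw [mulVec_mulVec, hUU, one_mulVec]
  have hxU : x ᵥ* U = y := by
    rw [hy, star_eq_conjTranspose, conjTranspose_eq_transpose_of_trivial, ← vecMul_transpose,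
      transpose_transpose]
  have hquad : x ⬝ᵥ A *ᵥ x = ∑ i, hA.eigenvalues i * y i ^ 2 := by
    conv_lhs => rw [hA.spectral_theorem, Unitary.conjStarAlgAut_apply]
    rw [← mulVec_mulVec, ← mulVec_mulVec, dotProduct_mulVec, hxU]
    simp only [dotProduct, mulVec_diagonal, Function.comp_apply,
      RCLike.ofReal_real_eq_id, id_eq]
    exact Finset.sum_congr rfl fun i _ => by ring
  have hnorm : x ⬝ᵥ x = ∑ i, y i ^ 2 := by
    rw [show x ⬝ᵥ x = x ⬝ᵥ U *ᵥ y by rw [hUy], dotProduct_mulVec, hxU]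
    simp [dotProduct, pow_two]
  rw [hquad, hnorm, Finset.mul_sum]
  exact Finset.sum_le_sum fun i _ => mul_le_mul_of_nonneg_right (hc i) (sq_nonneg _)

lemma exists_eigenvalues_neg (hA : A.IsHermitian) (hA0 : A ≠ 0) (htr : A.trace = 0) :
    ∃ i, hA.eigenvalues i < 0 := by
  by_contra! hnonneg
  have hsum : ∑ i, hA.eigenvalues i = 0 := by simpa [hA.trace_eq_sum_eigenvalues] using htr
  refine hA0 (hA.eigenvalues_eq_zero_iff.mp (funext fun i => ?_))
  exact (Finset.sum_eq_zero_iff_of_nonneg fun i _ => hnonneg i).mp hsum i (Finset.mem_univ i)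

end Matrix.IsHermitian

namespace Real

lemma exp_sub_self_le_exp_sub_self {a b : ℝ} (hb : 0 ≤ b) (hba : b ≤ a) :
    exp b - b ≤ exp a - a := by
  have h : exp a = exp b * exp (a - b) := by rw [← exp_add, add_sub_cancel]
  nlinarith [add_one_le_exp (a - b), one_le_exp hb]

lemma exp_add_card_sub_lt_sum_exp {ι : Type*} [Fintype ι] {f : ι → ℝ} (hf : ∑ i, f i = 0)
    {i₀ j : ι} (hj : j ≠ i₀) (hfj : f j ≠ 0) :
    exp (f i₀) + (Fintype.card ι - 1) - f i₀ < ∑ i, exp (f i) := by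
  classical
  set g : ι → ℝ := fun i => exp (f i) - f i - 1
  have hg : ∀ i, 0 ≤ g i := fun i => by linarith [add_one_le_exp (f i)]
  have hsum : ∑ i, g i = ∑ i, exp (f i) - Fintype.card ι := by
    simp [g, Finset.sum_sub_distrib, hf]
  have hpair : g i₀ + g j ≤ ∑ i, g i := by
    rw [← Finset.sum_pair hj.symm]
    exact Finset.sum_le_sum_of_subset_of_nonneg (Finset.subset_univ _) fun i _ _ => hg i
  have hgj : 0 < g j := by linarith [add_one_lt_exp hfj]
  linarith

end Real

namespace EstradaIndexPaper

section

variable {n : ℕ} (G : SimpleGraph (Fin n)) [DecidableRel G.Adj]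

lemma randicHalf_nonneg : 0 ≤ randicHalf G :=
  Finset.sum_nonneg fun e _ => by
    induction e using Sym2.ind with
    | _ i j => exact Real.sqrt_nonneg _

lemma sum_eig_eq_zero : ∑ i, eig G i = 0 := by
  simpa [eig, G.trace_adjMatrix (α := ℝ)] using
    (adjMatrix_isHermitian G).trace_eq_sum_eigenvalues.symm

lemma exists_eig_neg (hG : G ≠ ⊥) : ∃ i, eig G i < 0 :=
  (adjMatrix_isHermitian G).exists_eigenvalues_neg (G.adjMatrix_ne_zero hG)
    (G.trace_adjMatrix (α := ℝ))

noncomputable def sqrtDegree : Fin n → ℝ := fun v => √(G.degree v)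

lemma sqrtDegree_dotProduct_self : sqrtDegree G ⬝ᵥ sqrtDegree G = 2 * #G.edgeFinset := by
  simp only [dotProduct, sqrtDegree, Real.mul_self_sqrt (Nat.cast_nonneg _)]
  exact_mod_cast G.sum_degrees_eq_twice_card_edges

lemma sqrtDegree_dotProduct_adjMatrix_mulVec :
    sqrtDegree G ⬝ᵥ G.adjMatrix ℝ *ᵥ sqrtDegree G = 2 * randicHalf G := by
  rw [G.dotProduct_mulVec_adjMatrix, ← G.sum_darts_eq_sum_sum_adj, randicHalf, two_mul,
    ← two_nsmul, ← G.sum_darts_edge_eq_two_nsmul]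
  exact sum_congr rfl fun d _ => (Real.sqrt_mul (Nat.cast_nonneg _) _).symm

lemma randicHalf_le_mul_card_edgeFinset {c : ℝ} (hc : ∀ i, eig G i ≤ c) :
    randicHalf G ≤ c * #G.edgeFinset := by
  have h := (adjMatrix_isHermitian G).dotProduct_mulVec_le hc (sqrtDegree G)
  rw [sqrtDegree_dotProduct_adjMatrix_mulVec, sqrtDegree_dotProduct_self] at h
  linarith

end

theorem stmt3 {n : ℕ} (G : SimpleGraph (Fin n)) [DecidableRel G.Adj]
    (hm : 1 ≤ G.edgeFinset.card) :
    EE G > Real.exp (randicHalf G / (G.edgeFinset.card : ℝ)) + ((n : ℝ) - 1) -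
      randicHalf G / (G.edgeFinset.card : ℝ) := by
  have hm0 : (0 : ℝ) < #G.edgeFinset := by exact_mod_cast hm
  obtain ⟨j, hj⟩ := exists_eig_neg G (SimpleGraph.edgeFinset_nonempty.mp (card_pos.mp hm))
  have : Nonempty (Fin n) := ⟨j⟩
  obtain ⟨i₀, hmax⟩ := Finite.exists_max (eig G)
  have hR : randicHalf G / #G.edgeFinset ≤ eig G i₀ :=
    (div_le_iff₀ hm0).mpr (randicHalf_le_mul_card_edgeFinset G hmax)
  have hR0 : 0 ≤ randicHalf G / #G.edgeFinset := div_nonneg (randicHalf_nonneg G) hm0.le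
  have hji : j ≠ i₀ := fun h => by subst h; linarith
  have hEE := Real.exp_add_card_sub_lt_sum_exp (sum_eig_eq_zero G) hji hj.ne
  have hmono := Real.exp_sub_self_le_exp_sub_self hR0 hR
  rw [Fintype.card_fin] at hEE
  rw [EE, gt_iff_lt]
  linarith

end EstradaIndexPaper
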